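/- arXiv:1712.03822 — 4 statements merged into one kernel-verified Lean document; each statement's English description precedes it below -/
import Mathlib

section
/- Let Q ⊆ ℝᵐ be nonempty, closed and convex, and A a real m×n matrix. The function f(x) = ½‖(I − P_Q)(Ax)‖² is differentiable with gradient ∇f(x) = Aᵗ(Ax − P_Q(Ax)), and ∇f is Lipschitz continuous with constant ‖A‖². -/
/-!
By the variational inequality `⟪x - P x, z - P x⟫ ≤ 0` (`z ∈ Q`), the residual `r = I - P` is
firmly nonexpansive. With `v = u + h`, comparing `‖r v‖` with `‖v - P u‖` and `‖r u‖` with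
`‖u - P v‖` puts `½‖r v‖² - ½‖r u‖² - ⟪r u, h⟫` between `⟪r v - r u, h⟫ - ½‖h‖²` and `½‖h‖²`;
monotonicity of `r` bounds it by `½‖h‖²` in absolute value, so `½‖r‖²` has gradient `r`. The chain
rule through `A` and the Lipschitz constants `‖A‖`, `1`, `‖A†‖ = ‖A‖` of `A`, `r`, `A†` finish.
-/

open RealInnerProductSpace Asymptotics

section NearestPoint

variable {E : Type*} [NormedAddCommGroup E] [InnerProductSpace ℝ E]

def IsNearestPointMap (Q : Set E) (P : E → E) : Prop :=
  ∀ x, P x ∈ Q ∧ ∀ z ∈ Q, ‖x - P x‖ ≤ ‖x - z‖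

namespace IsNearestPointMap

variable {Q : Set E} {P : E → E}

theorem real_inner_sub_le_zero (hP : IsNearestPointMap Q P) (hQ : Convex ℝ Q) (x : E)
    {z : E} (hz : z ∈ Q) : ⟪x - P x, z - P x⟫ ≤ 0 := by
  have : Nonempty Q := ⟨⟨P x, (hP x).1⟩⟩
  refine (norm_eq_iInf_iff_real_inner_le_zero hQ (hP x).1).1 ?_ z hz
  exact le_antisymm (le_ciInf fun w => (hP x).2 w w.2)
    (ciInf_le ⟨0, by rintro _ ⟨w, rfl⟩; exact norm_nonneg _⟩ (⟨P x, (hP x).1⟩ : Q))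

theorem norm_sub_sub_sq_le_inner (hP : IsNearestPointMap Q P) (hQ : Convex ℝ Q) (x y : E) :
    ‖(x - P x) - (y - P y)‖ ^ 2 ≤ ⟪(x - P x) - (y - P y), x - y⟫ := by
  have hx := hP.real_inner_sub_le_zero hQ x (hP y).1
  have hy := hP.real_inner_sub_le_zero hQ y (hP x).1
  have hsplit : x - y = ((x - P x) - (y - P y)) + (P x - P y) := by abel
  have hxy : P y - P x = -(P x - P y) := (neg_sub _ _).symm
  rw [hxy, inner_neg_right] at hx
  rw [hsplit, inner_add_right, real_inner_self_eq_norm_sq, inner_sub_left]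
  linarith

theorem lipschitzWith_one_sub (hP : IsNearestPointMap Q P) (hQ : Convex ℝ Q) :
    LipschitzWith 1 fun x => x - P x := by
  refine LipschitzWith.of_dist_le_mul fun x y => ?_
  rw [NNReal.coe_one, one_mul, dist_eq_norm, dist_eq_norm]
  have hsq := hP.norm_sub_sub_sq_le_inner hQ x y
  have hcs := real_inner_le_norm ((x - P x) - (y - P y)) (x - y)
  rcases (norm_nonneg ((x - P x) - (y - P y))).eq_or_lt with h | h
  · rw [← h]; exact norm_nonneg _
  · exact le_of_mul_le_mul_left (by rw [← sq]; linarith) h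

theorem hasGradientAt_half_norm_sub_sq [CompleteSpace E] (hP : IsNearestPointMap Q P) (hQ : Convex ℝ Q) (u : E) :
    HasGradientAt (fun v => (1 / 2) * ‖v - P v‖ ^ 2) (u - P u) u := by
  rw [hasGradientAt_iff_isLittleO_nhds_zero]
  refine IsBigO.trans_isLittleO ?_ (isLittleO_norm_pow_id one_lt_two)
  refine IsBigO.of_bound (1 / 2) (Filter.Eventually.of_forall fun h => ?_)
  set v := u + h
  have hvu : v - u = h := add_sub_cancel_left u h
  have hupper : ‖v - P v‖ ^ 2 ≤ ‖u - P u‖ ^ 2 + 2 * ⟪u - P u, h⟫ + ‖h‖ ^ 2 := by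
    have hv : v - P u = (u - P u) + h := by rw [← hvu]; abel
    rw [← norm_add_sq_real, ← hv]
    gcongr
    exact (hP v).2 _ (hP u).1
  have hlower : ‖u - P u‖ ^ 2 ≤ ‖v - P v‖ ^ 2 - 2 * ⟪v - P v, h⟫ + ‖h‖ ^ 2 := by
    have hu : u - P v = (v - P v) - h := by rw [← hvu]; abel
    rw [← norm_sub_sq_real, ← hu]
    gcongr
    exact (hP u).2 _ (hP v).1
  have hmono : 0 ≤ ⟪(v - P v) - (u - P u), h⟫ :=
    hvu ▸ (sq_nonneg _).trans (hP.norm_sub_sub_sq_le_inner hQ v u)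
  rw [inner_sub_left] at hmono
  rw [Real.norm_eq_abs, Real.norm_eq_abs, abs_of_nonneg (sq_nonneg ‖h‖), abs_le]
  constructor <;> linarith

end IsNearestPointMap

end NearestPoint

theorem HasGradientAt.comp_continuousLinearMap {E F : Type*}
    [NormedAddCommGroup E] [InnerProductSpace ℝ E] [CompleteSpace E]
    [NormedAddCommGroup F] [InnerProductSpace ℝ F] [CompleteSpace F]
    {g : F → ℝ} {g' : F} (A : E →L[ℝ] F) {x : E} (hg : HasGradientAt g g' (A x)) :
    HasGradientAt (fun x => g (A x)) (ContinuousLinearMap.adjoint A g') x := by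
  rw [hasGradientAt_iff_hasFDerivAt] at hg ⊢
  refine (hg.comp x A.hasFDerivAt).congr_fderiv ?_
  ext y
  simp [ContinuousLinearMap.adjoint_inner_left]

theorem gradient_sfp_smooth_part_general (m n : ℕ)
    (Q : Set (EuclideanSpace ℝ (Fin m)))
    (hQcv : Convex ℝ Q)
    (P : EuclideanSpace ℝ (Fin m) → EuclideanSpace ℝ (Fin m))
    (hP : ∀ x, P x ∈ Q ∧ ∀ z ∈ Q, ‖x - P x‖ ≤ ‖x - z‖)
    (A : EuclideanSpace ℝ (Fin n) →L[ℝ] EuclideanSpace ℝ (Fin m)) :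
    (∀ x, HasGradientAt (fun x => (1 / 2) * ‖A x - P (A x)‖ ^ 2)
        (ContinuousLinearMap.adjoint A (A x - P (A x))) x) ∧
      LipschitzWith (‖A‖₊ ^ 2)
        (fun x => ContinuousLinearMap.adjoint A (A x - P (A x))) := by
  have hP : IsNearestPointMap Q P := hP
  refine ⟨fun x => (hP.hasGradientAt_half_norm_sub_sq hQcv (A x)).comp_continuousLinearMap A, ?_⟩
  have h := (ContinuousLinearMap.adjoint A).lipschitz.comp
    ((hP.lipschitzWith_one_sub hQcv).comp A.lipschitz)
  rwa [LinearIsometryEquiv.nnnorm_map, one_mul, ← sq] at h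

theorem gradient_sfp_smooth_part (m n : ℕ)
    (Q : Set (EuclideanSpace ℝ (Fin m)))
    (hQne : Q.Nonempty) (hQcl : IsClosed Q) (hQcv : Convex ℝ Q)
    (P : EuclideanSpace ℝ (Fin m) → EuclideanSpace ℝ (Fin m))
    (hP : ∀ x, P x ∈ Q ∧ ∀ z ∈ Q, ‖x - P x‖ ≤ ‖x - z‖)
    (A : EuclideanSpace ℝ (Fin n) →L[ℝ] EuclideanSpace ℝ (Fin m)) :
    (∀ x, HasGradientAt (fun x => (1 / 2) * ‖A x - P (A x)‖ ^ 2)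
        (ContinuousLinearMap.adjoint A (A x - P (A x))) x) ∧
      LipschitzWith (‖A‖₊ ^ 2)
        (fun x => ContinuousLinearMap.adjoint A (A x - P (A x))) :=
  gradient_sfp_smooth_part_general m n Q hQcv P hP A
end

section
/- Let r(x) = ‖x‖₁ − ‖x‖₂ on ℝⁿ, λ > 0, and y ∈ ℝⁿ with λ < ‖y‖_∞. Set z = prox_{λ‖·‖₁}(y) (the soft-thresholding of y by λ), which is nonzero. Then x* = ((λ + ‖z‖₂)/‖z‖₂)·z is a global minimizer of x ↦ λ r(x) + ½‖x − y‖². -/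
/-!
Write `z` for the soft-thresholding of `y` and `‖x‖₁` for `∑ i, |x i|`. Coordinatewise,
`xᵢ yᵢ - λ |xᵢ| ≤ |xᵢ| (|yᵢ| - λ)₊ = |xᵢ| |zᵢ|`, so by Cauchy–Schwarz
`⟪x, y⟫ - λ ‖x‖₁ ≤ ‖x‖ ‖z‖`. Expanding `‖x - y‖²`, the objective is therefore at least
`½ ‖x‖² - (λ + ‖z‖) ‖x‖ + ½ ‖y‖² ≥ ½ ‖y‖² - ½ (λ + ‖z‖)²`.
Both inequalities are equalities at `x = t z` with `t ‖z‖ = λ + ‖z‖`: the first because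
`⟪z, y⟫ - λ ‖z‖₁ = ‖z‖²`, the second because `‖x‖ = λ + ‖z‖`.
-/

noncomputable section

namespace Real

lemma sign_mul_self_eq_abs (a : ℝ) : sign a * a = |a| := by
  rcases lt_trichotomy a 0 with h | rfl | h
  · rw [sign_of_neg h, abs_of_neg h]; ring
  · simp
  · rw [sign_of_pos h, abs_of_pos h]; ring

lemma abs_sign_of_ne_zero {a : ℝ} (h : a ≠ 0) : |sign a| = 1 := by
  rcases sign_apply_eq_of_ne_zero a h with h | h <;> simp [h]

end Real

namespace ProxL1MinusL2

def softThresh (lam a : ℝ) : ℝ := Real.sign a * max (|a| - lam) 0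

lemma softThresh_of_abs_le {lam a : ℝ} (h : |a| ≤ lam) : softThresh lam a = 0 := by
  simp [softThresh, max_eq_right (sub_nonpos.mpr h)]

lemma softThresh_of_lt_abs {lam a : ℝ} (h : lam < |a|) :
    softThresh lam a = Real.sign a * (|a| - lam) := by
  rw [softThresh, max_eq_left (sub_nonneg.mpr h.le)]

lemma abs_softThresh {lam : ℝ} (hlam : 0 ≤ lam) (a : ℝ) :
    |softThresh lam a| = max (|a| - lam) 0 := by
  rcases le_or_gt |a| lam with h | h
  · rw [softThresh_of_abs_le h, max_eq_right (sub_nonpos.mpr h), abs_zero]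
  · have ha : a ≠ 0 := abs_pos.mp (hlam.trans_lt h)
    rw [softThresh_of_lt_abs h, abs_mul, Real.abs_sign_of_ne_zero ha, one_mul,
      abs_of_pos (sub_pos.mpr h), max_eq_left (sub_pos.mpr h).le]

lemma mul_sub_mul_abs_le {lam : ℝ} (hlam : 0 ≤ lam) (x a : ℝ) :
    x * a - lam * |x| ≤ |x| * |softThresh lam a| := by
  rw [abs_softThresh hlam]
  calc x * a - lam * |x| ≤ |x| * (|a| - lam) := by
        nlinarith [abs_mul x a ▸ le_abs_self (x * a)]
    _ ≤ |x| * max (|a| - lam) 0 := by gcongr; exact le_max_left _ _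

lemma softThresh_mul_sub (lam a : ℝ) :
    softThresh lam a * a - lam * |softThresh lam a| = softThresh lam a ^ 2 := by
  rcases le_or_gt |a| lam with h | h
  · simp [softThresh_of_abs_le h]
  · rcases eq_or_ne a 0 with rfl | ha
    · simp [softThresh]
    have hsign : |Real.sign a| = 1 := Real.abs_sign_of_ne_zero ha
    rw [softThresh_of_lt_abs h, abs_mul, hsign, abs_of_pos (sub_pos.mpr h), mul_pow,
      ← sq_abs (Real.sign a), hsign, mul_right_comm, Real.sign_mul_self_eq_abs]
    ring

lemma softThresh_ne_zero {lam a : ℝ} (hlam : 0 ≤ lam) (h : lam < |a|) : softThresh lam a ≠ 0 := by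
  rw [← abs_ne_zero, abs_softThresh hlam, max_eq_left (sub_pos.mpr h).le]
  exact (sub_pos.mpr h).ne'

variable {ι : Type*}

def softThreshold (lam : ℝ) (y : EuclideanSpace ℝ ι) : EuclideanSpace ℝ ι :=
  WithLp.toLp 2 fun i => softThresh lam (y i)

lemma sum_abs_mul_abs_le_norm_mul_norm [Fintype ι] (x z : EuclideanSpace ℝ ι) :
    ∑ i, |x i| * |z i| ≤ ‖x‖ * ‖z‖ := by
  simpa only [EuclideanSpace.norm_eq, Real.norm_eq_abs]
    using Real.sum_mul_le_sqrt_mul_sqrt Finset.univ (fun i => |x i|) (fun i => |z i|)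

lemma inner_sub_mul_sum_abs_le [Fintype ι] {lam : ℝ} (hlam : 0 ≤ lam) (x y : EuclideanSpace ℝ ι) :
    inner ℝ x y - lam * ∑ i, |x i| ≤ ‖x‖ * ‖softThreshold lam y‖ := by
  calc inner ℝ x y - lam * ∑ i, |x i| = ∑ i, (x i * y i - lam * |x i|) := by
        simp only [PiLp.inner_apply, Real.inner_apply, Finset.sum_sub_distrib, Finset.mul_sum]
    _ ≤ ∑ i, |x i| * |softThreshold lam y i| :=
        Finset.sum_le_sum fun i _ => mul_sub_mul_abs_le hlam (x i) (y i)
    _ ≤ ‖x‖ * ‖softThreshold lam y‖ := sum_abs_mul_abs_le_norm_mul_norm _ _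

lemma inner_softThreshold_sub_mul_sum_abs [Fintype ι] (lam : ℝ) (y : EuclideanSpace ℝ ι) :
    inner ℝ (softThreshold lam y) y - lam * ∑ i, |softThreshold lam y i|
      = ‖softThreshold lam y‖ ^ 2 := by
  rw [EuclideanSpace.norm_sq_eq]
  simp only [PiLp.inner_apply, Real.inner_apply, Real.norm_eq_abs, sq_abs, Finset.mul_sum,
    ← Finset.sum_sub_distrib]
  exact Finset.sum_congr rfl fun i _ => softThresh_mul_sub lam (y i)

lemma softThreshold_ne_zero {lam : ℝ} (hlam : 0 ≤ lam) {y : EuclideanSpace ℝ ι}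
    (hy : lam < ⨆ i, |y i|) : softThreshold lam y ≠ 0 := by
  cases isEmpty_or_nonempty ι
  · rw [Real.iSup_of_isEmpty] at hy
    exact absurd hy hlam.not_gt
  obtain ⟨i, hi⟩ := exists_lt_of_lt_ciSup hy
  intro h
  exact softThresh_ne_zero hlam hi (congrArg (· i) h)

variable [Fintype ι]

def proxObjective (lam : ℝ) (y x : EuclideanSpace ℝ ι) : ℝ :=
  lam * ((∑ i, |x i|) - ‖x‖) + (1 / 2) * ‖x - y‖ ^ 2

lemma proxObjective_ge {lam : ℝ} (hlam : 0 ≤ lam) (y x : EuclideanSpace ℝ ι) :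
    (1 / 2) * ‖y‖ ^ 2 - (1 / 2) * (lam + ‖softThreshold lam y‖) ^ 2 ≤ proxObjective lam y x := by
  have h := inner_sub_mul_sum_abs_le hlam x y
  rw [proxObjective, norm_sub_sq_real]
  nlinarith [sq_nonneg (‖x‖ - lam - ‖softThreshold lam y‖)]

lemma proxObjective_smul_softThreshold {lam : ℝ} (hlam : 0 ≤ lam) (y : EuclideanSpace ℝ ι)
    (hy : softThreshold lam y ≠ 0) :
    proxObjective lam y
        (((lam + ‖softThreshold lam y‖) / ‖softThreshold lam y‖) • softThreshold lam y)
      = (1 / 2) * ‖y‖ ^ 2 - (1 / 2) * (lam + ‖softThreshold lam y‖) ^ 2 := by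
  have hzy := inner_softThreshold_sub_mul_sum_abs lam y
  set z := softThreshold lam y
  have hz_pos : 0 < ‖z‖ := norm_pos_iff.mpr hy
  have ht : 0 ≤ (lam + ‖z‖) / ‖z‖ := by positivity
  have htz : (lam + ‖z‖) / ‖z‖ * ‖z‖ = lam + ‖z‖ := div_mul_cancel₀ _ hz_pos.ne'
  generalize (lam + ‖z‖) / ‖z‖ = t at ht htz ⊢
  have hnorm : ‖t • z‖ = lam + ‖z‖ := by rw [norm_smul, Real.norm_of_nonneg ht, htz]
  have hsum : ∑ i, |(t • z) i| = t * ∑ i, |z i| := by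
    simp only [PiLp.smul_apply, smul_eq_mul, abs_mul, abs_of_nonneg ht, Finset.mul_sum]
  have hinner : inner ℝ (t • z) y = t * inner ℝ z y := real_inner_smul_left z y t
  rw [proxObjective, norm_sub_sq_real, hnorm, hsum, hinner]
  linear_combination (-t) * hzy - ‖z‖ * htz

end ProxL1MinusL2

end

theorem prox_l1_minus_l2_closed_form (n : ℕ) (lam : ℝ) (hlam : 0 < lam)
    (y : EuclideanSpace ℝ (Fin n)) (hly : lam < ⨆ i, |y i|) :
    let z : EuclideanSpace ℝ (Fin n) := WithLp.toLp 2 (fun i => Real.sign (y i) * max (|y i| - lam) 0)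
    let f : EuclideanSpace ℝ (Fin n) → ℝ :=
      fun x => lam * ((∑ i, |x i|) - ‖x‖) + (1 / 2) * ‖x - y‖ ^ 2
    z ≠ 0 ∧ ∀ x, f (((lam + ‖z‖) / ‖z‖) • z) ≤ f x := by
  have hz : ProxL1MinusL2.softThreshold lam y ≠ 0 :=
    ProxL1MinusL2.softThreshold_ne_zero hlam.le hly
  exact ⟨hz, fun x => (ProxL1MinusL2.proxObjective_smul_softThreshold hlam.le y hz).trans_le
    (ProxL1MinusL2.proxObjective_ge hlam.le y x)⟩
end

section
/- DCA monotone decrease: let g, h : ℝⁿ → ℝ ∪ {+∞} be proper convex functions, f = g − h. Suppose yₖ ∈ ∂h(xₖ) and x_{k+1} minimizes x ↦ g(x) − (h(xₖ) + ⟨yₖ, x − xₖ⟩) over ℝⁿ. Then f(x_{k+1}) ≤ f(xₖ). -/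
theorem dca_monotone_decrease_general (n : ℕ)
    (g h : EuclideanSpace ℝ (Fin n) → ℝ)
    (xk xk1 yk : EuclideanSpace ℝ (Fin n))
    (hyk : ∀ x, h x ≥ h xk + (inner ℝ yk (x - xk) : ℝ))
    (hmin : ∀ x, g xk1 - (h xk + (inner ℝ yk (xk1 - xk) : ℝ)) ≤
        g x - (h xk + (inner ℝ yk (x - xk) : ℝ))) :
    g xk1 - h xk1 ≤ g xk - h xk :=
  calc g xk1 - h xk1 ≤ g xk1 - (h xk + inner ℝ yk (xk1 - xk)) := by linarith [hyk xk1]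
    _ ≤ g xk - (h xk + inner ℝ yk (xk - xk)) := hmin xk
    _ = g xk - h xk := by simp

theorem dca_monotone_decrease (n : ℕ)
    (g h : EuclideanSpace ℝ (Fin n) → ℝ)
    (hg : ConvexOn ℝ Set.univ g) (hh : ConvexOn ℝ Set.univ h)
    (xk xk1 yk : EuclideanSpace ℝ (Fin n))
    (hyk : ∀ x, h x ≥ h xk + (inner ℝ yk (x - xk) : ℝ))
    (hmin : ∀ x, g xk1 - (h xk + (inner ℝ yk (xk1 - xk) : ℝ)) ≤
        g x - (h xk + (inner ℝ yk (x - xk) : ℝ))) :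
    g xk1 - h xk1 ≤ g xk - h xk :=
  dca_monotone_decrease_general n g h xk xk1 yk hyk hmin
end

section
/- Optimality implies stationarity for the ℓ1−ℓ2 SFP: let A be a real m×n matrix, Q ⊆ ℝᵐ and C ⊆ ℝⁿ nonempty closed convex, γ > 0, and suppose x* ∈ C with x* ≠ 0 is a local minimizer of F(x) = ½‖(I − P_Q)(Ax)‖₂² + γ(‖x‖₁ − ‖x‖₂) over C. Then 0 ∈ Aᵗ(Ax* − P_Q(Ax*)) + γ(∂‖x*‖₁ − x*/‖x*‖₂) + N_C(x*). -/
/-!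
Write `r = x*/‖x*‖` and `g = Aᵗ(Ax* - P(Ax*)) - γ r`. Since `P(Ax*) ∈ Q` and `P` is a best
approximation, `‖Ay - P(Ay)‖² ≤ ‖Ay - P(Ax*)‖²`, a quadratic in `y`; by Cauchy–Schwarz
`‖y‖₂ ≥ ⟪r, y⟫`; and `‖·‖₁` is convex. Along the segment from `x*` to `y ∈ C` this bounds `F`
by `F(x*) + t (⟪g, y - x*⟫ + γ (‖y‖₁ - ‖x*‖₁)) + O(t²)`, so local minimality makes `x*` a
minimizer over `C` of the convex function `H = ⟪g, ·⟫ + γ‖·‖₁`. Separating the open strict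
epigraph of `H` from `C × (-∞, H(x*)]` (Hahn–Banach) yields a subgradient `v` with `-v` normal to
`C` at `x*`, and `w = γ⁻¹ (v - g)` is the required element of `∂‖x*‖₁`.
-/

open Set Filter Topology
open scoped InnerProductSpace

theorem ConvexOn.exists_subgradient_of_isMinOn {E : Type*} [NormedAddCommGroup E]
    [NormedSpace ℝ E] {f : E → ℝ} {C : Set E} {x : E} (hf : ConvexOn ℝ univ f)
    (hfc : Continuous f) (hC : Convex ℝ C) (hx : x ∈ C) (hmin : IsMinOn f C x) :
    ∃ φ : StrongDual ℝ E, (∀ y, f x + φ (y - x) ≤ f y) ∧ ∀ y ∈ C, 0 ≤ φ (y - x) := by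
  have hU : Convex ℝ {p : E × ℝ | f p.1 < p.2} := by
    simpa using hf.convex_strict_epigraph
  have hdisj : Disjoint {p : E × ℝ | f p.1 < p.2} (C ×ˢ Iic (f x)) :=
    disjoint_left.2 fun p hpU hpV => (hpU.trans_le hpV.2).not_ge (isMinOn_iff.1 hmin _ hpV.1)
  obtain ⟨ℓ, u, hℓU, hℓV⟩ := geometric_hahn_banach_open hU
    (isOpen_lt (hfc.comp continuous_fst) continuous_snd) (hC.prod (convex_Iic _)) hdisj
  set φ₀ := ℓ.comp (ContinuousLinearMap.inl ℝ E ℝ)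
  set c := ℓ (0, 1)
  have hsplit : ∀ y s, ℓ (y, s) = φ₀ y + s * c := fun y s => by
    show ℓ (y, s) = ℓ (y, 0) + s * ℓ (0, 1)
    rw [← smul_eq_mul, ← map_smul, ← map_add]
    simp
  -- `(y, f y)` lies in the closure of the open strict epigraph.
  have hgraph : ∀ y, φ₀ y + f y * c ≤ u := fun y => by
    simp_rw [← hsplit]
    exact le_of_tendsto (((ℓ.continuous.comp (Continuous.prodMk_right y)).tendsto _).mono_left
      nhdsWithin_le_nhds)
      (eventually_nhdsWithin_of_forall (s := Ioi (f y)) fun s hs => (hℓU (y, s) hs).le)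
  have hV : ∀ y ∈ C, u ≤ φ₀ y + f x * c := fun y hy => by
    simpa [hsplit] using hℓV _ (mk_mem_prod hy (mem_Iic.2 le_rfl))
  have hc : 0 < -c := by
    have := hℓU (x, f x + 1) (by simp)
    linarith [hsplit x (f x + 1), hV x hx]
  refine ⟨(-c)⁻¹ • φ₀, fun y => ?_, fun y hy => ?_⟩
  · have : (-c)⁻¹ * (φ₀ y - φ₀ x) ≤ f y - f x := by
      rw [inv_mul_le_iff₀ hc]
      linarith [hgraph y, hV x hx]
    simp only [FunLike.coe_smul, Pi.smul_apply, map_sub, smul_eq_mul]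
    linarith
  · simp only [FunLike.coe_smul, Pi.smul_apply, map_sub, smul_eq_mul, ← mul_sub]
    exact mul_nonneg (inv_nonneg.2 hc.le) (sub_nonneg.2 (by linarith [hgraph x, hV y hy]))

section InnerProduct

variable {E : Type*} [NormedAddCommGroup E] [InnerProductSpace ℝ E]

theorem exists_subgradient_add_normal_eq_zero [CompleteSpace E] {h : E → ℝ} {C : Set E}
    {x g : E} {γ : ℝ} (hh : ConvexOn ℝ univ h) (hhc : Continuous h) (hγ : 0 < γ)
    (hC : Convex ℝ C) (hx : x ∈ C) (hstat : ∀ y ∈ C, 0 ≤ ⟪g, y - x⟫_ℝ + γ * (h y - h x)) :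
    ∃ w, (∀ y, h x + ⟪w, y - x⟫_ℝ ≤ h y) ∧
      ∃ d, (∀ y ∈ C, ⟪d, y - x⟫_ℝ ≤ 0) ∧ g + γ • w + d = 0 := by
  have hH : ConvexOn ℝ univ fun y => ⟪g, y⟫_ℝ + γ * h y :=
    ((innerₛₗ ℝ g).convexOn convex_univ).add (hh.smul hγ.le)
  obtain ⟨φ, hφ, hφC⟩ := hH.exists_subgradient_of_isMinOn (by fun_prop) hC hx <|
    isMinOn_iff.2 fun y hy => by linarith [hstat y hy, inner_sub_right (𝕜 := ℝ) g y x]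
  set v := (InnerProductSpace.toDual ℝ E).symm φ
  have hv : ∀ z, ⟪v, z⟫_ℝ = φ z := fun z => InnerProductSpace.toDual_symm_apply
  refine ⟨γ⁻¹ • (v - g), fun y => ?_, -v, fun y hy => ?_, ?_⟩
  · have : (φ (y - x) - ⟪g, y - x⟫_ℝ) / γ ≤ h y - h x := by
      rw [div_le_iff₀' hγ]
      linarith [hφ y, inner_sub_right (𝕜 := ℝ) g y x]
    rw [real_inner_smul_left, inner_sub_left, hv, inv_mul_eq_div]
    linarith
  · simpa [hv] using hφC y hy
  · rw [smul_smul, mul_inv_cancel₀ hγ.ne', one_smul]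
    abel

theorem norm_add_inner_normalize_sub_le (x y : E) : ‖x‖ + ⟪‖x‖⁻¹ • x, y - x⟫_ℝ ≤ ‖y‖ := by
  rcases eq_or_ne x 0 with rfl | hx
  · simp
  have hx' : 0 < ‖x‖ := norm_pos_iff.2 hx
  have : (⟪x, y⟫_ℝ - ‖x‖ ^ 2) / ‖x‖ ≤ ‖y‖ - ‖x‖ := by
    rw [div_le_iff₀ hx']
    linarith [real_inner_le_norm x y]
  rw [real_inner_smul_left, inner_sub_right, real_inner_self_eq_norm_sq, inv_mul_eq_div]
  linarith

theorem sq_norm_sub_le_of_isBestApprox {Q : Set E} {P : E → E}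
    (hP : ∀ z, P z ∈ Q ∧ ∀ q ∈ Q, ‖z - P z‖ ≤ ‖z - q‖) (x u : E) :
    ‖u - P u‖ ^ 2 ≤ ‖x - P x‖ ^ 2 + 2 * ⟪x - P x, u - x⟫_ℝ + ‖u - x‖ ^ 2 :=
  calc ‖u - P u‖ ^ 2 ≤ ‖u - P x‖ ^ 2 :=
        pow_le_pow_left₀ (norm_nonneg _) ((hP u).2 _ (hP x).1) 2
    _ = ‖(x - P x) + (u - x)‖ ^ 2 := by rw [sub_add_sub_cancel']
    _ = _ := norm_add_sq_real _ _

end InnerProduct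

theorem IsLocalMinOn.nonneg_of_segment_le {E : Type*} [NormedAddCommGroup E] [NormedSpace ℝ E]
    {F : E → ℝ} {C : Set E} {x y : E} {L K : ℝ} (hmin : IsLocalMinOn F C x) (hC : Convex ℝ C)
    (hx : x ∈ C) (hy : y ∈ C)
    (hle : ∀ t ∈ Ioc (0 : ℝ) 1, F (x + t • (y - x)) ≤ F x + t * L + t ^ 2 * K) : 0 ≤ L := by
  have hseg : Tendsto (fun t : ℝ => x + t • (y - x)) (𝓝[>] 0) (𝓝[C] x) := by
    refine tendsto_nhdsWithin_iff.2 ⟨?_, ?_⟩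
    · have : Continuous fun t : ℝ => x + t • (y - x) := by fun_prop
      simpa using (this.tendsto 0).mono_left nhdsWithin_le_nhds
    · filter_upwards [Ioc_mem_nhdsGT one_pos] with t ht
      exact hC.add_smul_sub_mem hx hy (Ioc_subset_Icc_self ht)
  have hev : ∀ᶠ t in 𝓝[>] (0 : ℝ), 0 ≤ L + t * K := by
    filter_upwards [hseg.eventually hmin, Ioc_mem_nhdsGT one_pos] with t hFt ht
    have := hFt.trans (hle t ht)
    exact nonneg_of_mul_nonneg_right (by linarith) ht.1
  have hlim : Tendsto (fun t : ℝ => L + t * K) (𝓝[>] 0) (𝓝 L) := by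
    have : Continuous fun t : ℝ => L + t * K := by fun_prop
    simpa using (this.tendsto 0).mono_left nhdsWithin_le_nhds
  exact ge_of_tendsto hlim hev

theorem convexOn_sum_abs {ι : Type*} [Fintype ι] :
    ConvexOn ℝ univ fun x : EuclideanSpace ℝ ι => ∑ i, |x i| := by
  refine ⟨convex_univ, fun x _ y _ a b ha hb _ => ?_⟩
  simp only [PiLp.add_apply, PiLp.smul_apply, smul_eq_mul, Finset.mul_sum,
    ← Finset.sum_add_distrib]
  gcongr with i
  calc |a * x i + b * y i| ≤ |a * x i| + |b * y i| := abs_add_le _ _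
    _ = a * |x i| + b * |y i| := by rw [abs_mul, abs_mul, abs_of_nonneg ha, abs_of_nonneg hb]

theorem continuous_sum_abs {ι : Type*} [Fintype ι] :
    Continuous fun x : EuclideanSpace ℝ ι => ∑ i, |x i| := by
  fun_prop

section Objective

variable {E F : Type*} [NormedAddCommGroup E] [InnerProductSpace ℝ E] [CompleteSpace E]
  [NormedAddCommGroup F] [InnerProductSpace ℝ F] [CompleteSpace F]

noncomputable def sfpObjective (A : E →L[ℝ] F) (P : F → F) (γ : ℝ) (h : E → ℝ) (x : E) : ℝ :=
  1 / 2 * ‖A x - P (A x)‖ ^ 2 + γ * (h x - ‖x‖)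

theorem sfpObjective_segment_le {Q : Set F} {P : F → F}
    (hP : ∀ z, P z ∈ Q ∧ ∀ q ∈ Q, ‖z - P z‖ ≤ ‖z - q‖) (A : E →L[ℝ] F) {h : E → ℝ}
    (hh : ConvexOn ℝ univ h) {γ : ℝ} (hγ : 0 ≤ γ) (x y : E) {t : ℝ} (ht : t ∈ Icc (0 : ℝ) 1) :
    sfpObjective A P γ h (x + t • (y - x)) ≤ sfpObjective A P γ h x
      + t * (⟪A.adjoint (A x - P (A x)) - γ • (‖x‖⁻¹ • x), y - x⟫_ℝ + γ * (h y - h x))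
      + t ^ 2 * (1 / 2 * ‖A (y - x)‖ ^ 2) := by
  have hdist := sq_norm_sub_le_of_isBestApprox hP (A x) (A (x + t • (y - x)))
  have hnorm := norm_add_inner_normalize_sub_le x (x + t • (y - x))
  have hconv : h (x + t • (y - x)) ≤ h x + t * (h y - h x) := by
    have := hh.2 (mem_univ x) (mem_univ y) (sub_nonneg.2 ht.2) ht.1 (sub_add_cancel 1 t)
    rw [show (1 - t) • x + t • y = x + t • (y - x) by module, smul_eq_mul, smul_eq_mul] at this
    linarith
  have hstep : A (x + t • (y - x)) - A x = t • A (y - x) := by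
    rw [map_add, map_smul, add_sub_cancel_left]
  rw [hstep, real_inner_smul_right, norm_smul,
    ← ContinuousLinearMap.adjoint_inner_left, Real.norm_eq_abs, mul_pow, sq_abs] at hdist
  rw [add_sub_cancel_left, real_inner_smul_right] at hnorm
  rw [inner_sub_left, real_inner_smul_left]
  unfold sfpObjective
  linarith [mul_le_mul_of_nonneg_left hconv hγ, mul_le_mul_of_nonneg_left hnorm hγ]

end Objective

theorem local_min_implies_stationary_general (m n : ℕ)
    (A : EuclideanSpace ℝ (Fin n) →L[ℝ] EuclideanSpace ℝ (Fin m))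
    (Q : Set (EuclideanSpace ℝ (Fin m)))
    (P : EuclideanSpace ℝ (Fin m) → EuclideanSpace ℝ (Fin m))
    (hP : ∀ x, P x ∈ Q ∧ ∀ z ∈ Q, ‖x - P x‖ ≤ ‖x - z‖)
    (C : Set (EuclideanSpace ℝ (Fin n)))
    (hCcv : Convex ℝ C)
    (γ : ℝ) (hγ : 0 < γ)
    (F : EuclideanSpace ℝ (Fin n) → ℝ)
    (hF : F = fun x => (1 / 2) * ‖A x - P (A x)‖ ^ 2 + γ * ((∑ i, |x i|) - ‖x‖))
    (xs : EuclideanSpace ℝ (Fin n)) (hxsC : xs ∈ C)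
    (hloc : ∃ ε > 0, ∀ y ∈ C, ‖y - xs‖ < ε → F xs ≤ F y) :
    ∃ w : EuclideanSpace ℝ (Fin n),
      (∀ y, (∑ i, |y i|) ≥ (∑ i, |xs i|) + (inner ℝ w (y - xs) : ℝ)) ∧
      ∃ d : EuclideanSpace ℝ (Fin n),
        (∀ y ∈ C, (inner ℝ d (y - xs) : ℝ) ≤ 0) ∧
        0 = ContinuousLinearMap.adjoint A (A xs - P (A xs)) +
          γ • (w - ‖xs‖⁻¹ • xs) + d := by
  obtain ⟨ε, hε, hε_min⟩ := hloc
  have hmin : IsLocalMinOn F C xs := Metric.mem_nhdsWithin_iff.2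
    ⟨ε, hε, fun y ⟨hyε, hyC⟩ => hε_min y hyC (by rwa [← dist_eq_norm])⟩
  subst hF
  have hstat : ∀ y ∈ C, 0 ≤ ⟪A.adjoint (A xs - P (A xs)) - γ • (‖xs‖⁻¹ • xs), y - xs⟫_ℝ
      + γ * ((∑ i, |y i|) - ∑ i, |xs i|) := fun y hy =>
    hmin.nonneg_of_segment_le hCcv hxsC hy fun t ht =>
      sfpObjective_segment_le hP A convexOn_sum_abs hγ.le xs y (Ioc_subset_Icc_self ht)
  obtain ⟨w, hw, d, hd, h0⟩ :=
    exists_subgradient_add_normal_eq_zero convexOn_sum_abs continuous_sum_abs hγ hCcv hxsC hstat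
  refine ⟨w, hw, d, hd, ?_⟩
  rw [← h0]
  module

theorem local_min_implies_stationary (m n : ℕ)
    (A : EuclideanSpace ℝ (Fin n) →L[ℝ] EuclideanSpace ℝ (Fin m))
    (Q : Set (EuclideanSpace ℝ (Fin m)))
    (hQne : Q.Nonempty) (hQcl : IsClosed Q) (hQcv : Convex ℝ Q)
    (P : EuclideanSpace ℝ (Fin m) → EuclideanSpace ℝ (Fin m))
    (hP : ∀ x, P x ∈ Q ∧ ∀ z ∈ Q, ‖x - P x‖ ≤ ‖x - z‖)
    (C : Set (EuclideanSpace ℝ (Fin n)))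
    (hCne : C.Nonempty) (hCcl : IsClosed C) (hCcv : Convex ℝ C)
    (γ : ℝ) (hγ : 0 < γ)
    (F : EuclideanSpace ℝ (Fin n) → ℝ)
    (hF : F = fun x => (1 / 2) * ‖A x - P (A x)‖ ^ 2 + γ * ((∑ i, |x i|) - ‖x‖))
    (xs : EuclideanSpace ℝ (Fin n)) (hxsC : xs ∈ C) (hxs0 : xs ≠ 0)
    (hloc : ∃ ε > 0, ∀ y ∈ C, ‖y - xs‖ < ε → F xs ≤ F y) :
    ∃ w : EuclideanSpace ℝ (Fin n),
      (∀ y, (∑ i, |y i|) ≥ (∑ i, |xs i|) + (inner ℝ w (y - xs) : ℝ)) ∧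
      ∃ d : EuclideanSpace ℝ (Fin n),
        (∀ y ∈ C, (inner ℝ d (y - xs) : ℝ) ≤ 0) ∧
        0 = ContinuousLinearMap.adjoint A (A xs - P (A xs)) +
          γ • (w - ‖xs‖⁻¹ • xs) + d :=
  local_min_implies_stationary_general m n A Q P hP C hCcv γ hγ F hF xs hxsC hloc
end
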